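/- arXiv:2505.11554 — 4 statements merged into one kernel-verified Lean document; each statement's English description precedes it below -/
import Mathlib

section
/- (Soundness of Pruning Rule 2.) Let ι be a finite index type of tasks and u : ι → ℕ → ℕ → ℚ a utilization function that is nonnegative and antitone in each resource argument (i.e., if b ≤ b' and k ≤ k' then u i b' k' ≤ u i b k). Let B̄, K̄ be the remaining memory bandwidth and cache partitions and M̄ the number of remaining cores. If ∑ i, u i B̄ K̄ > M̄, then for every task assignment f : ι → Fin M̄ and every per-core resource allocation b, k : Fin M̄ → ℕ satisfying ∑ m, b m ≤ B̄ and ∑ m, k m ≤ K̄, there exists a core m with ∑ i with f i = m, u i (b m) (k m) > 1; in other words, no completion of the partial solution makes every core EDF-schedulable. -/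
/-! No core receives more than all remaining resources, so by antitonicity each task's
utilization on its core is at least its utilization under `(B̄, K̄)`. Summing over the
cores, the per-core utilizations add up to more than `M̄`, hence one of them exceeds `1`. -/

open Finset

theorem sum_le_sum_fiberwise_of_antitone {ι κ α β : Type*} [Fintype ι] [Fintype κ]
    [DecidableEq κ] [Preorder α] [AddCommMonoid β] [PartialOrder β] [IsOrderedAddMonoid β]
    {u : ι → α → β} (hu : ∀ i, Antitone (u i)) (f : ι → κ) {a : κ → α} {A : α}
    (ha : ∀ m, a m ≤ A) :
    ∑ i, u i A ≤ ∑ m, ∑ i ∈ univ.filter (fun i => f i = m), u i (a m) :=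
  calc ∑ i, u i A = ∑ m, ∑ i ∈ univ.filter (fun i => f i = m), u i A :=
        (sum_fiberwise univ f _).symm
    _ ≤ ∑ m, ∑ i ∈ univ.filter (fun i => f i = m), u i (a m) :=
        sum_le_sum fun m _ => sum_le_sum fun i _ => hu i (ha m)

theorem stmt_1_general {ι : Type*} [Fintype ι] (u : ι → ℕ → ℕ → ℚ)
    (hanti : ∀ i b b' k k', b ≤ b' → k ≤ k' → u i b' k' ≤ u i b k)
    (Brem Krem Mrem : ℕ) (htot : (Mrem : ℚ) < ∑ i, u i Brem Krem)
    (f : ι → Fin Mrem) (b k : Fin Mrem → ℕ)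
    (hb : ∑ m, b m ≤ Brem) (hk : ∑ m, k m ≤ Krem) :
    ∃ m : Fin Mrem,
      1 < ∑ i ∈ Finset.univ.filter (fun i => f i = m), u i (b m) (k m) := by
  have hcore_le : ∀ m, (b m, k m) ≤ (Brem, Krem) := fun m =>
    ⟨(single_le_sum (fun _ _ => Nat.zero_le _) (mem_univ m)).trans hb,
      (single_le_sum (fun _ _ => Nat.zero_le _) (mem_univ m)).trans hk⟩
  have hcap := sum_le_sum_fiberwise_of_antitone (u := fun i (r : ℕ × ℕ) => u i r.1 r.2)
    (fun i _ _ h => hanti i _ _ _ _ (Prod.mk_le_mk.1 h).1 (Prod.mk_le_mk.1 h).2) f hcore_le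
  have hover : ∑ _m : Fin Mrem, (1 : ℚ) < ∑ m, ∑ i ∈ univ.filter (fun i => f i = m),
      u i (b m) (k m) := by
    simpa using htot.trans_le hcap
  obtain ⟨m, -, hm⟩ := exists_lt_of_sum_lt hover
  exact ⟨m, hm⟩

/-- Soundness of Pruning Rule 2: if the total utilization of the remaining tasks,
computed as if every core received all remaining resources, exceeds the number of
remaining cores, then no completion of the partial solution makes every core
EDF-schedulable. -/
theorem stmt_1 {ι : Type*} [Fintype ι] (u : ι → ℕ → ℕ → ℚ)
    (hnn : ∀ i b k, 0 ≤ u i b k)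
    (hanti : ∀ i b b' k k', b ≤ b' → k ≤ k' → u i b' k' ≤ u i b k)
    (Brem Krem Mrem : ℕ) (htot : (Mrem : ℚ) < ∑ i, u i Brem Krem)
    (f : ι → Fin Mrem) (b k : Fin Mrem → ℕ)
    (hb : ∑ m, b m ≤ Brem) (hk : ∑ m, k m ≤ Krem) :
    ∃ m : Fin Mrem,
      1 < ∑ i ∈ Finset.univ.filter (fun i => f i = m), u i (b m) (k m) :=
  stmt_1_general u hanti Brem Krem Mrem htot f b k hb hk
end

section
/- (Encoding correctness of the 0-1 ILP.) Fix natural numbers N, M ≥ 1, B ≥ 1, K ≥ 1 and a utilization function U : Fin N → ℕ → ℕ → ℚ. There exist functions x : Fin N → Fin M → ℤ, y : Fin B → Fin M → ℤ, z : Fin K → Fin M → ℤ, and α : Fin N → Fin B → Fin K → Fin M → ℤ, all taking values in {0, 1}, satisfying: (i) for every task i, ∑ m, x i m = 1; (ii) for every core m, ∑ b, y b m = 1 and ∑ k, z k m = 1 (where b ranges over 1..B and k over 1..K); (iii) ∑ m ∑ b, b · (y b m) ≤ B and ∑ m ∑ k, k · (z k m) ≤ K; (iv) for all i, b, k, m: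 3·(α i b k m) ≤ x i m + y b m + z k m and α i b k m ≥ x i m + y b m + z k m − 2; and (v) for every core m, ∑ i ∑ b ∑ k, (α i b k m) · U i b k ≤ 1 — if and only if there exist a task assignment f : Fin N → Fin M and per-core allocations bw, ca : Fin M → ℕ with 1 ≤ bw m ≤ B and 1 ≤ ca m ≤ K for every m, ∑ m, bw m ≤ B, ∑ m, ca m ≤ K, and for every core m, ∑ i with f i = m, U i (bw m) (ca m) ≤ 1. -/
/-!
A 0-1 vector with coordinate sum 1 is the indicator `Pi.single j 1` of a single index, so the
variables `x`, `y`, `z` of a feasible ILP point encode a task assignment `f` and, per core, one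
bandwidth level `bs m` and one cache level `ks m`.  For 0-1 values the two inequalities on `α`
say exactly `α = x * y * z`, so the weighted sums of the ILP collapse to `∑ m, (bs m + 1)`,
`∑ m, (ks m + 1)` and the per-core utilization `∑_{f i = m} U i (bs m + 1) (ks m + 1)`.
-/

open Finset

lemma zero_or_one_and_sum_eq_one_iff_eq_single {ι : Type*} [Fintype ι] [DecidableEq ι]
    (g : ι → ℤ) :
    ((∀ j, g j = 0 ∨ g j = 1) ∧ ∑ j, g j = 1) ↔ ∃ j, g = Pi.single j 1 := by
  constructor
  · rintro ⟨h01, hsum⟩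
    obtain ⟨j, -, hj⟩ := exists_ne_zero_of_sum_ne_zero (s := univ) (f := g) (by omega)
    have hrest : ∑ j' ∈ univ.erase j, g j' = 0 := by
      have := add_sum_erase univ g (mem_univ j)
      rcases h01 j with h | h <;> omega
    have hnonneg : ∀ j' ∈ univ.erase j, 0 ≤ g j' := fun j' _ => by
      rcases h01 j' with h | h <;> omega
    refine ⟨j, funext fun j' => ?_⟩
    rcases eq_or_ne j' j with rfl | hne
    · simpa using (h01 j').resolve_left hj
    · simpa [hne] using (sum_eq_zero_iff_of_nonneg hnonneg).1 hrest j' (by simpa using hne)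
  · rintro ⟨j, rfl⟩
    refine ⟨fun j' => ?_, by simp⟩
    rcases eq_or_ne j' j with rfl | hne <;> simp [*]

lemma linearized_and_iff_eq_mul {p q r a : ℤ} (hp : p = 0 ∨ p = 1) (hq : q = 0 ∨ q = 1)
    (hr : r = 0 ∨ r = 1) (ha : a = 0 ∨ a = 1) :
    (3 * a ≤ p + q + r ∧ p + q + r - 2 ≤ a) ↔ a = p * q * r := by
  rcases hp with rfl | rfl <;> rcases hq with rfl | rfl <;> rcases hr with rfl | rfl <;>
    rcases ha with rfl | rfl <;> decide

lemma single_eq_zero_or_one {ι : Type*} [DecidableEq ι] (j j' : ι) :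
    (Pi.single j 1 : ι → ℤ) j' = 0 ∨ (Pi.single j 1 : ι → ℤ) j' = 1 := by
  rcases eq_or_ne j' j with rfl | hne <;> simp [*]

lemma mul_eq_zero_or_one {p q : ℤ} (hp : p = 0 ∨ p = 1) (hq : q = 0 ∨ q = 1) :
    p * q = 0 ∨ p * q = 1 := by
  rcases hp with rfl | rfl <;> simp [hq]

lemma sum_succ_mul_single {n : ℕ} (s : Fin n) :
    ∑ b : Fin n, ((b : ℕ) + 1 : ℤ) * (Pi.single s 1 : Fin n → ℤ) b = (s : ℕ) + 1 := by
  simp [Pi.single_apply]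

lemma sum_single_mul_single_mul_single {ι β κ μ : Type*} [Fintype ι] [Fintype β] [Fintype κ]
    [DecidableEq β] [DecidableEq κ] [DecidableEq μ] (f : ι → μ) (m : μ) (s : β) (t : κ)
    (V : ι → β → κ → ℚ) :
    ∑ i, ∑ b, ∑ k, (((Pi.single (f i) 1 : μ → ℤ) m * (Pi.single s 1 : β → ℤ) b *
      (Pi.single t 1 : κ → ℤ) k : ℤ) : ℚ) * V i b k =
      ∑ i ∈ univ.filter (f · = m), V i s t := by
  rw [sum_filter]
  refine sum_congr rfl fun i _ => ?_
  by_cases h : f i = m <;> simp [Pi.single_apply, h, eq_comm (a := m)]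

section

variable {N M B K : ℕ}

/-- The 0-1 ILP, with `a` playing the role of `α`. -/
def IlpFeasible (N M B K : ℕ) (U : Fin N → ℕ → ℕ → ℚ) : Prop :=
  ∃ (x : Fin N → Fin M → ℤ) (y : Fin B → Fin M → ℤ) (z : Fin K → Fin M → ℤ)
      (a : Fin N → Fin B → Fin K → Fin M → ℤ),
    (∀ i m, x i m = 0 ∨ x i m = 1) ∧
    (∀ b m, y b m = 0 ∨ y b m = 1) ∧
    (∀ k m, z k m = 0 ∨ z k m = 1) ∧
    (∀ i b k m, a i b k m = 0 ∨ a i b k m = 1) ∧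
    (∀ i, ∑ m, x i m = 1) ∧
    (∀ m, ∑ b, y b m = 1) ∧
    (∀ m, ∑ k, z k m = 1) ∧
    (∑ m, ∑ b : Fin B, ((b : ℕ) + 1 : ℤ) * y b m ≤ (B : ℤ)) ∧
    (∑ m, ∑ k : Fin K, ((k : ℕ) + 1 : ℤ) * z k m ≤ (K : ℤ)) ∧
    (∀ i b k m, 3 * a i b k m ≤ x i m + y b m + z k m ∧
      x i m + y b m + z k m - 2 ≤ a i b k m) ∧
    (∀ m, ∑ i, ∑ b : Fin B, ∑ k : Fin K,
      (a i b k m : ℚ) * U i ((b : ℕ) + 1) ((k : ℕ) + 1) ≤ 1)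

def EdfSchedulable (N M B K : ℕ) (U : Fin N → ℕ → ℕ → ℚ) : Prop :=
  ∃ (f : Fin N → Fin M) (bw ca : Fin M → ℕ),
    (∀ m, 1 ≤ bw m ∧ bw m ≤ B) ∧
    (∀ m, 1 ≤ ca m ∧ ca m ≤ K) ∧
    (∑ m, bw m ≤ B) ∧
    (∑ m, ca m ≤ K) ∧
    (∀ m, ∑ i ∈ univ.filter (fun i => f i = m), U i (bw m) (ca m) ≤ 1)

/-- Schedulability with the allocation of core `m` given by the levels `bs m : Fin B` and
`ks m : Fin K`, i.e. `bs m + 1` bandwidth and `ks m + 1` cache partitions. -/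
def SchedulableAt (U : Fin N → ℕ → ℕ → ℚ) (f : Fin N → Fin M) (bs : Fin M → Fin B)
    (ks : Fin M → Fin K) : Prop :=
  ∑ m, ((bs m : ℕ) + 1) ≤ B ∧ ∑ m, ((ks m : ℕ) + 1) ≤ K ∧
    ∀ m, ∑ i ∈ univ.filter (f · = m), U i ((bs m : ℕ) + 1) ((ks m : ℕ) + 1) ≤ 1

lemma exists_schedulableAt_of_ilpFeasible {U : Fin N → ℕ → ℕ → ℚ}
    (h : IlpFeasible N M B K U) :
    ∃ (f : Fin N → Fin M) (bs : Fin M → Fin B) (ks : Fin M → Fin K),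
      SchedulableAt U f bs ks := by
  obtain ⟨x, y, z, a, hx01, hy01, hz01, ha01, hx, hy, hz, hyB, hzK, hand, hU⟩ := h
  choose f hf using fun i => (zero_or_one_and_sum_eq_one_iff_eq_single (x i)).1 ⟨hx01 i, hx i⟩
  choose bs hbs using fun m =>
    (zero_or_one_and_sum_eq_one_iff_eq_single (y · m)).1 ⟨(hy01 · m), hy m⟩
  choose ks hks using fun m =>
    (zero_or_one_and_sum_eq_one_iff_eq_single (z · m)).1 ⟨(hz01 · m), hz m⟩
  have hya : ∀ b m, y b m = (Pi.single (bs m) 1 : Fin B → ℤ) b := fun b m =>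
    congrFun (hbs m) b
  have hza : ∀ k m, z k m = (Pi.single (ks m) 1 : Fin K → ℤ) k := fun k m =>
    congrFun (hks m) k
  have ha : ∀ i b k m, a i b k m = x i m * y b m * z k m := fun i b k m =>
    (linearized_and_iff_eq_mul (hx01 i m) (hy01 b m) (hz01 k m) (ha01 i b k m)).1 (hand i b k m)
  refine ⟨f, bs, ks, ?_, ?_, fun m => ?_⟩
  · simp only [hya, sum_succ_mul_single] at hyB
    exact_mod_cast hyB
  · simp only [hza, sum_succ_mul_single] at hzK
    exact_mod_cast hzK
  · simpa only [ha, hf, hya, hza, sum_single_mul_single_mul_single] using hU m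

lemma ilpFeasible_of_schedulableAt {U : Fin N → ℕ → ℕ → ℚ} {f : Fin N → Fin M}
    {bs : Fin M → Fin B} {ks : Fin M → Fin K} (h : SchedulableAt U f bs ks) :
    IlpFeasible N M B K U := by
  obtain ⟨hB, hK, hU⟩ := h
  have h01 := @single_eq_zero_or_one
  refine ⟨fun i => Pi.single (f i) 1, fun b m => (Pi.single (bs m) 1 : Fin B → ℤ) b,
    fun k m => (Pi.single (ks m) 1 : Fin K → ℤ) k, fun i b k m =>
      (Pi.single (f i) 1 : Fin M → ℤ) m * (Pi.single (bs m) 1 : Fin B → ℤ) b *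
        (Pi.single (ks m) 1 : Fin K → ℤ) k,
    fun i m => h01 _ _, fun b m => h01 _ _, fun k m => h01 _ _,
    fun i b k m => mul_eq_zero_or_one (mul_eq_zero_or_one (h01 _ _) (h01 _ _)) (h01 _ _),
    fun i => by simp, fun m => by simp, fun m => by simp, ?_, ?_,
    fun i b k m => (linearized_and_iff_eq_mul (h01 _ _) (h01 _ _) (h01 _ _)
      (mul_eq_zero_or_one (mul_eq_zero_or_one (h01 _ _) (h01 _ _)) (h01 _ _))).2 rfl,
    fun m => by simpa only [sum_single_mul_single_mul_single] using hU m⟩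
  · simp only [sum_succ_mul_single]
    exact_mod_cast hB
  · simp only [sum_succ_mul_single]
    exact_mod_cast hK

lemma ilpFeasible_iff {U : Fin N → ℕ → ℕ → ℚ} :
    IlpFeasible N M B K U ↔
      ∃ (f : Fin N → Fin M) (bs : Fin M → Fin B) (ks : Fin M → Fin K),
      SchedulableAt U f bs ks :=
  ⟨exists_schedulableAt_of_ilpFeasible, fun ⟨_, _, _, h⟩ => ilpFeasible_of_schedulableAt h⟩

lemma exists_fin_succ_eq {n a : ℕ} (h : 1 ≤ a ∧ a ≤ n) : ∃ s : Fin n, (s : ℕ) + 1 = a :=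
  ⟨⟨a - 1, by omega⟩, by simp only; omega⟩

lemma edfSchedulable_iff {U : Fin N → ℕ → ℕ → ℚ} :
    EdfSchedulable N M B K U ↔
      ∃ (f : Fin N → Fin M) (bs : Fin M → Fin B) (ks : Fin M → Fin K),
      SchedulableAt U f bs ks := by
  constructor
  · rintro ⟨f, bw, ca, hbw, hca, hB, hK, hU⟩
    choose bs hbs using fun m => exists_fin_succ_eq (hbw m)
    choose ks hks using fun m => exists_fin_succ_eq (hca m)
    exact ⟨f, bs, ks, by simpa only [hbs] using hB, by simpa only [hks] using hK,
      by simpa only [hbs, hks] using hU⟩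
  · rintro ⟨f, bs, ks, hB, hK, hU⟩
    exact ⟨f, fun m => (bs m : ℕ) + 1, fun m => (ks m : ℕ) + 1,
      fun m => ⟨Nat.le_add_left 1 _, (bs m).2⟩, fun m => ⟨Nat.le_add_left 1 _, (ks m).2⟩,
      hB, hK, hU⟩

end

theorem stmt_5_general (N M B K : ℕ)
    (U : Fin N → ℕ → ℕ → ℚ) :
    (∃ (x : Fin N → Fin M → ℤ) (y : Fin B → Fin M → ℤ) (z : Fin K → Fin M → ℤ)
        (a : Fin N → Fin B → Fin K → Fin M → ℤ),
      (∀ i m, x i m = 0 ∨ x i m = 1) ∧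
      (∀ b m, y b m = 0 ∨ y b m = 1) ∧
      (∀ k m, z k m = 0 ∨ z k m = 1) ∧
      (∀ i b k m, a i b k m = 0 ∨ a i b k m = 1) ∧
      (∀ i, ∑ m, x i m = 1) ∧
      (∀ m, ∑ b, y b m = 1) ∧
      (∀ m, ∑ k, z k m = 1) ∧
      (∑ m, ∑ b : Fin B, ((b : ℕ) + 1 : ℤ) * y b m ≤ (B : ℤ)) ∧
      (∑ m, ∑ k : Fin K, ((k : ℕ) + 1 : ℤ) * z k m ≤ (K : ℤ)) ∧
      (∀ i b k m, 3 * a i b k m ≤ x i m + y b m + z k m ∧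
        x i m + y b m + z k m - 2 ≤ a i b k m) ∧
      (∀ m, ∑ i, ∑ b : Fin B, ∑ k : Fin K,
        (a i b k m : ℚ) * U i ((b : ℕ) + 1) ((k : ℕ) + 1) ≤ 1)) ↔
    (∃ (f : Fin N → Fin M) (bw ca : Fin M → ℕ),
      (∀ m, 1 ≤ bw m ∧ bw m ≤ B) ∧
      (∀ m, 1 ≤ ca m ∧ ca m ≤ K) ∧
      (∑ m, bw m ≤ B) ∧
      (∑ m, ca m ≤ K) ∧
      (∀ m, ∑ i ∈ Finset.univ.filter (fun i => f i = m),
        U i (bw m) (ca m) ≤ 1)) :=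
  ilpFeasible_iff.trans edfSchedulable_iff.symm

/-- Encoding correctness of the 0-1 ILP: there exist 0-1 variables satisfying the
ILP constraints (1)-(10) iff there exist a task assignment and per-core resource
allocations (at least one partition of each resource per core, within the totals)
making every core EDF-schedulable.  The index `b : Fin B` encodes the allocation
of `b+1` memory bandwidth partitions (ranging over `1..B`), and similarly for
`k : Fin K`. -/
theorem stmt_5 (N M B K : ℕ) (hM : 1 ≤ M) (hB : 1 ≤ B) (hK : 1 ≤ K)
    (U : Fin N → ℕ → ℕ → ℚ) :
    (∃ (x : Fin N → Fin M → ℤ) (y : Fin B → Fin M → ℤ) (z : Fin K → Fin M → ℤ)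
        (a : Fin N → Fin B → Fin K → Fin M → ℤ),
      (∀ i m, x i m = 0 ∨ x i m = 1) ∧
      (∀ b m, y b m = 0 ∨ y b m = 1) ∧
      (∀ k m, z k m = 0 ∨ z k m = 1) ∧
      (∀ i b k m, a i b k m = 0 ∨ a i b k m = 1) ∧
      (∀ i, ∑ m, x i m = 1) ∧
      (∀ m, ∑ b, y b m = 1) ∧
      (∀ m, ∑ k, z k m = 1) ∧
      (∑ m, ∑ b : Fin B, ((b : ℕ) + 1 : ℤ) * y b m ≤ (B : ℤ)) ∧
      (∑ m, ∑ k : Fin K, ((k : ℕ) + 1 : ℤ) * z k m ≤ (K : ℤ)) ∧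
      (∀ i b k m, 3 * a i b k m ≤ x i m + y b m + z k m ∧
        x i m + y b m + z k m - 2 ≤ a i b k m) ∧
      (∀ m, ∑ i, ∑ b : Fin B, ∑ k : Fin K,
        (a i b k m : ℚ) * U i ((b : ℕ) + 1) ((k : ℕ) + 1) ≤ 1)) ↔
    (∃ (f : Fin N → Fin M) (bw ca : Fin M → ℕ),
      (∀ m, 1 ≤ bw m ∧ bw m ≤ B) ∧
      (∀ m, 1 ≤ ca m ∧ ca m ≤ K) ∧
      (∑ m, bw m ≤ B) ∧
      (∑ m, ca m ≤ K) ∧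
      (∀ m, ∑ i ∈ Finset.univ.filter (fun i => f i = m),
        U i (bw m) (ca m) ≤ 1)) :=
  stmt_5_general N M B K U
end

section
/- (Correctness of backtracking: an optimal subset is attained.) Let n be a natural number, w : Fin n → ℕ item weights, v : Fin n → ℚ nonnegative item values, γ a capacity, and dp defined by dp 0 j = 0 and dp (i+1) j = dp i j if w i > j, dp (i+1) j = max (dp i j) (dp i (j − w i) + v i) if w i ≤ j. Then there exists a subset S ⊆ Fin n with ∑ s ∈ S, w s ≤ γ and ∑ s ∈ S, v s = dp n γ; moreover every subset S' ⊆ Fin n with ∑ s ∈ S', w s ≤ γ satisfies ∑ s ∈ S', v s ≤ dp n γ. -/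
/-!
Write `V i j` (`Knapsack.values`) for the set of values of packings of capacity `j` drawn
from the first `i` items. A packing from the first `i + 1` items either avoids item `i`, or is item `i` together with a
packing of capacity `j - w i` from the first `i` items. Hence `V (i + 1) j` is `V i j`, or
`V i j ∪ (V i (j - w i) + v i)` when `w i ≤ j`, which is exactly the shape of the recursion for
`dp`; by induction `dp i j` is the greatest element of `V i j`.
-/

open Finset

namespace Knapsack

variable {n : ℕ} (w : Fin n → ℕ) (v : Fin n → ℚ)

def values (i j : ℕ) : Set ℚ :=
  (fun S : Finset (Fin n) => ∑ s ∈ S, v s) ''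
    {S | (∀ s ∈ S, (s : ℕ) < i) ∧ ∑ s ∈ S, w s ≤ j}

lemma forall_lt_of_forall_lt_succ {i : Fin n} {S : Finset (Fin n)}
    (hS : ∀ s ∈ S, (s : ℕ) < i + 1) (hi : i ∉ S) : ∀ s ∈ S, (s : ℕ) < i := by
  intro s hs
  have : (s : ℕ) ≠ i := Fin.val_ne_of_ne (ne_of_mem_of_not_mem hs hi)
  have := hS s hs
  omega

lemma values_zero (j : ℕ) : values w v 0 j = {0} := by
  ext x
  simp only [values, Set.mem_image, Set.mem_ofPred_eq, Set.mem_singleton_iff]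
  constructor
  · rintro ⟨S, ⟨hS, -⟩, rfl⟩
    rw [eq_empty_of_forall_notMem fun s hs => Nat.not_lt_zero _ (hS s hs), sum_empty]
  · rintro rfl
    exact ⟨∅, by simp⟩

lemma values_mono_left {i i' : ℕ} (h : i ≤ i') (j : ℕ) : values w v i j ⊆ values w v i' j :=
  Set.image_mono fun _ ⟨hS, hw⟩ => ⟨fun s hs => (hS s hs).trans_le h, hw⟩

lemma values_succ_of_lt (i : Fin n) {j : ℕ} (hj : j < w i) :
    values w v (i + 1) j = values w v i j := by
  refine Set.Subset.antisymm ?_ (values_mono_left w v (Nat.le_succ _) j)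
  rintro _ ⟨S, ⟨hS, hSw⟩, rfl⟩
  have hi : i ∉ S := fun hi => (single_le_sum (fun _ _ => Nat.zero_le _) hi).trans hSw |>.not_gt hj
  exact ⟨S, ⟨forall_lt_of_forall_lt_succ hS hi, hSw⟩, rfl⟩

lemma values_succ_of_le (i : Fin n) {j : ℕ} (hj : w i ≤ j) :
    values w v (i + 1) j = values w v i j ∪ (· + v i) '' values w v i (j - w i) := by
  apply Set.Subset.antisymm
  · rintro _ ⟨S, ⟨hS, hSw⟩, rfl⟩
    by_cases hi : i ∈ S
    · have hrest := forall_lt_of_forall_lt_succ (fun s hs => hS s (mem_of_mem_erase hs))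
        (notMem_erase i S)
      have hw := add_sum_erase S w hi
      refine Or.inr ⟨_, ⟨S.erase i, ⟨hrest, by omega⟩, rfl⟩, ?_⟩
      exact (add_comm _ _).trans (add_sum_erase S v hi)
    · exact Or.inl ⟨S, ⟨forall_lt_of_forall_lt_succ hS hi, hSw⟩, rfl⟩
  · rintro _ (hx | ⟨_, ⟨S, ⟨hS, hSw⟩, rfl⟩, rfl⟩)
    · exact values_mono_left w v (Nat.le_succ _) j hx
    · have hi : i ∉ S := fun hi => (hS i hi).false
      refine ⟨insert i S, ⟨?_, ?_⟩, ?_⟩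
      · simp only [mem_insert, forall_eq_or_imp]
        exact ⟨Nat.lt_succ_self _, fun s hs => (hS s hs).trans (Nat.lt_succ_self _)⟩
      · rw [sum_insert hi]
        omega
      · exact (sum_insert hi).trans (add_comm _ _)

theorem isGreatest_values (dp : ℕ → ℕ → ℚ) (hdp0 : ∀ j, dp 0 j = 0)
    (hdp1 : ∀ (i : Fin n) (j : ℕ), j < w i → dp ((i : ℕ) + 1) j = dp i j)
    (hdp2 : ∀ (i : Fin n) (j : ℕ), w i ≤ j →
      dp ((i : ℕ) + 1) j = max (dp i j) (dp i (j - w i) + v i)) :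
    ∀ i ≤ n, ∀ j, IsGreatest (values w v i j) (dp i j)
  | 0, _, j => by
    rw [values_zero, hdp0]
    exact isGreatest_singleton
  | i + 1, hi, j => by
    have ih := isGreatest_values dp hdp0 hdp1 hdp2 i (Nat.le_of_succ_le hi)
    obtain hj | hj := lt_or_ge j (w ⟨i, hi⟩)
    · rw [values_succ_of_lt w v ⟨i, hi⟩ hj, hdp1 ⟨i, hi⟩ j hj]
      exact ih j
    · rw [values_succ_of_le w v ⟨i, hi⟩ hj, hdp2 ⟨i, hi⟩ j hj]
      exact (ih j).union ((add_left_mono (a := v ⟨i, hi⟩)).map_isGreatest (ih _))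

end Knapsack

theorem stmt_8_general (n : ℕ) (w : Fin n → ℕ) (v : Fin n → ℚ)
    (γ : ℕ) (dp : ℕ → ℕ → ℚ)
    (hdp0 : ∀ j, dp 0 j = 0)
    (hdp1 : ∀ (i : Fin n) (j : ℕ), j < w i → dp ((i : ℕ) + 1) j = dp i j)
    (hdp2 : ∀ (i : Fin n) (j : ℕ), w i ≤ j →
      dp ((i : ℕ) + 1) j = max (dp i j) (dp i (j - w i) + v i)) :
    (∃ S : Finset (Fin n), (∑ s ∈ S, w s ≤ γ) ∧ (∑ s ∈ S, v s = dp n γ)) ∧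
    (∀ S' : Finset (Fin n), (∑ s ∈ S', w s ≤ γ) → ∑ s ∈ S', v s ≤ dp n γ) := by
  obtain ⟨⟨S, ⟨-, hSw⟩, hSv⟩, hub⟩ :=
    Knapsack.isGreatest_values w v dp hdp0 hdp1 hdp2 n le_rfl γ
  exact ⟨⟨S, hSw, hSv⟩, fun S' hS'w => hub ⟨S', ⟨fun s _ => s.isLt, hS'w⟩, rfl⟩⟩

/-- Correctness of backtracking: an optimal subset is attained.  There exists a
subset `S ⊆ Fin n` with total weight at most `γ` whose total value equals
`dp n γ`, and every subset with total weight at most `γ` has total value at most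
`dp n γ`. -/
theorem stmt_8 (n : ℕ) (w : Fin n → ℕ) (v : Fin n → ℚ) (hv : ∀ i, 0 ≤ v i)
    (γ : ℕ) (dp : ℕ → ℕ → ℚ)
    (hdp0 : ∀ j, dp 0 j = 0)
    (hdp1 : ∀ (i : Fin n) (j : ℕ), j < w i → dp ((i : ℕ) + 1) j = dp i j)
    (hdp2 : ∀ (i : Fin n) (j : ℕ), w i ≤ j →
      dp ((i : ℕ) + 1) j = max (dp i j) (dp i (j - w i) + v i)) :
    (∃ S : Finset (Fin n), (∑ s ∈ S, w s ≤ γ) ∧ (∑ s ∈ S, v s = dp n γ)) ∧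
    (∀ S' : Finset (Fin n), (∑ s ∈ S', w s ≤ γ) → ∑ s ∈ S', v s ≤ dp n γ) :=
  stmt_8_general n w v γ dp hdp0 hdp1 hdp2
end

section
/- (Inner-layer guarantee: the selected tasks maximize reference utilization and are EDF-schedulable.) Let ι be a finite index type of tasks, u : ι → ℚ the nonnegative true utilizations under the candidate resource allocation, v : ι → ℚ the nonnegative reference utilizations, γ a positive natural number, and define scaled weights w i = ⌈u i · γ⌉. Then there exists a subset S* ⊆ ι that maximizes ∑ i ∈ S, v i among all subsets S with ∑ i ∈ S, w i ≤ γ, and every such maximizer S* satisfies ∑ i ∈ S*, u i ≤ 1, i.e., the selected tasks are EDF-schedulable on the core. -/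
/-!
Since `x ≤ ⌈x⌉`, every set of tasks that fits the scaled knapsack satisfies
`γ * ∑ u i ≤ ∑ ⌈u i * γ⌉ ≤ γ`. An optimum exists because there are finitely many subsets and
`∅` is feasible.
-/

open Finset

theorem sum_le_one_of_sum_ceil_mul_le {ι K : Type*} [Field K] [LinearOrder K]
    [IsStrictOrderedRing K] [FloorRing K] {u : ι → K} {γ : ℕ} (hγ : 0 < γ) {S : Finset ι}
    (hS : ∑ i ∈ S, ⌈u i * γ⌉ ≤ (γ : ℤ)) : ∑ i ∈ S, u i ≤ 1 := by
  have hγK : (0 : K) < γ := by exact_mod_cast hγ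
  rw [← mul_le_mul_iff_of_pos_right hγK, one_mul, sum_mul]
  calc ∑ i ∈ S, u i * γ ≤ ∑ i ∈ S, (⌈u i * γ⌉ : K) := sum_le_sum fun i _ => Int.le_ceil _
    _ ≤ γ := by exact_mod_cast hS

theorem stmt_10_general {ι : Type*} [Fintype ι] (u v : ι → ℚ)
    (γ : ℕ) (hγ : 0 < γ) (w : ι → ℤ) (hw : ∀ i, w i = ⌈u i * (γ : ℚ)⌉) :
    (∃ S : Finset ι, (∑ i ∈ S, w i ≤ (γ : ℤ)) ∧
      ∀ S' : Finset ι, (∑ i ∈ S', w i ≤ (γ : ℤ)) →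
        ∑ i ∈ S', v i ≤ ∑ i ∈ S, v i) ∧
    (∀ S : Finset ι, (∑ i ∈ S, w i ≤ (γ : ℤ)) →
      (∀ S' : Finset ι, (∑ i ∈ S', w i ≤ (γ : ℤ)) →
        ∑ i ∈ S', v i ≤ ∑ i ∈ S, v i) →
      ∑ i ∈ S, u i ≤ 1) := by
  obtain rfl : w = fun i => ⌈u i * (γ : ℚ)⌉ := funext hw
  constructor
  · let Feasible := {S : Finset ι // ∑ i ∈ S, ⌈u i * (γ : ℚ)⌉ ≤ (γ : ℤ)}
    have : Nonempty Feasible := ⟨⟨∅, by simp⟩⟩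
    obtain ⟨⟨S, hS⟩, hmax⟩ := Finite.exists_max fun S : Feasible => ∑ i ∈ S.1, v i
    exact ⟨S, hS, fun S' hS' => hmax ⟨S', hS'⟩⟩
  · exact fun S hS _ => sum_le_one_of_sum_ceil_mul_le hγ hS

/-- Inner-layer guarantee: among all subsets whose total scaled weight
`∑ ⌈u i * γ⌉` is at most the scaled capacity `γ`, a subset maximizing the total
reference utilization `∑ v i` exists, and every such maximizer has total true
utilization at most 1, i.e., is EDF-schedulable on the core. -/
theorem stmt_10 {ι : Type*} [Fintype ι] (u v : ι → ℚ)
    (hu : ∀ i, 0 ≤ u i) (hv : ∀ i, 0 ≤ v i)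
    (γ : ℕ) (hγ : 0 < γ) (w : ι → ℤ) (hw : ∀ i, w i = ⌈u i * (γ : ℚ)⌉) :
    (∃ S : Finset ι, (∑ i ∈ S, w i ≤ (γ : ℤ)) ∧
      ∀ S' : Finset ι, (∑ i ∈ S', w i ≤ (γ : ℤ)) →
        ∑ i ∈ S', v i ≤ ∑ i ∈ S, v i) ∧
    (∀ S : Finset ι, (∑ i ∈ S, w i ≤ (γ : ℤ)) →
      (∀ S' : Finset ι, (∑ i ∈ S', w i ≤ (γ : ℤ)) →
        ∑ i ∈ S', v i ≤ ∑ i ∈ S, v i) →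
      ∑ i ∈ S, u i ≤ 1) :=
  stmt_10_general u v γ hγ w hw
end
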